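/- Let V be a finite set of vertices, 𝒱 a finite set of states, and F a finite family of subsets a ⊆ V with nonnegative factor functions Ψ_a depending only on coordinates in a. Suppose p : (V → 𝒱) → ℝ is given by p(x) = (1/Z) Π_{a∈F} Ψ_a(x_a) with Z = Σ_x Π_a Ψ_a(x_a) > 0. Let G be the simple graph on V connecting every pair of distinct vertices that appear together in some scope a ∈ F, and let N(s) be the neighbors of s in G. Then for any vertex s and any two configurations x, x' that agree on {s} ∪ N(s) and for which the conditionals are defined, p(x_s | x_{V∖{s}}) = p(x'_s | x'_{V∖{s}}); that is, the conditional distribution of X_s given all other variables depends only on the values of its neighbors. -/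

import Mathlib

/-!
On the fibre `{update x s b | b}` the factors whose scope misses `s` are constant, so they
contribute the same multiplicative constant to `p x` and to the fibre sum and cancel in the
conditional. The remaining factors have scopes containing `s`, hence see only `s` and its
neighbours, where `x` and `x'` agree.
-/

open Finset Function

section Conditional

variable {V 𝒱 : Type*} [DecidableEq V] [Fintype 𝒱]

theorem filter_agree_off_eq_image_update [Fintype V] [DecidableEq 𝒱] (x : V → 𝒱) (s : V) :
    ({z | ∀ v, v ≠ s → z v = x v} : Finset (V → 𝒱)) = univ.image (update x s) := by
  ext z
  simp only [mem_filter, mem_univ, true_and, mem_image]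
  constructor
  · intro hz
    exact ⟨z s, funext fun v => by
      rcases eq_or_ne v s with rfl | hv
      · simp
      · rw [update_of_ne hv, hz v hv]⟩
  · rintro ⟨b, rfl⟩ v hv
    exact update_of_ne hv b x

theorem sum_ite_agree_off_eq_sum_update [Fintype V] [DecidableEq 𝒱]
    {M : Type*} [AddCommMonoid M] (g : (V → 𝒱) → M) (x : V → 𝒱) (s : V) :
    (∑ z, if (∀ v, v ≠ s → z v = x v) then g z else 0) = ∑ b, g (update x s b) := by
  rw [← sum_filter, filter_agree_off_eq_image_update,
    sum_image fun _ _ _ _ h => update_injective x s h]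

theorem div_sum_update_eq_of_update_eq_mul {K : Type*} [Field K] (f : (V → 𝒱) → K)
    (g : 𝒱 → K) (c : K) {y : V → 𝒱} {s : V} (hy : ∀ b, f (update y s b) = c * g b)
    (hden : ∑ b, f (update y s b) ≠ 0) :
    f y / ∑ b, f (update y s b) = g (y s) / ∑ b, g b := by
  have hfy : f y = c * g (y s) := by simpa using hy (y s)
  simp_rw [hy, ← mul_sum] at hden ⊢
  rw [hfy, mul_div_mul_left _ _ (left_ne_zero_of_mul hden)]

end Conditional

section Factorization

variable {V 𝒱 M : Type*} [DecidableEq V] [CommMonoid M]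
  {F : Finset (Finset V)} {Ψ : Finset V → (V → 𝒱) → M}

theorem prod_update_eq_mul_prod_not_mem
    (hlocal : ∀ a ∈ F, ∀ x y : V → 𝒱, (∀ v ∈ a, x v = y v) → Ψ a x = Ψ a y)
    (y : V → 𝒱) (s : V) (b : 𝒱) :
    ∏ a ∈ F, Ψ a (update y s b)
      = (∏ a ∈ F with s ∈ a, Ψ a (update y s b)) * ∏ a ∈ F with s ∉ a, Ψ a y := by
  rw [← prod_filter_mul_prod_filter_not F (s ∈ ·)]
  congr 1
  refine prod_congr rfl fun a ha => ?_
  obtain ⟨haF, hsa⟩ := mem_filter.1 ha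
  exact hlocal a haF _ _ fun t ht => update_of_ne (ne_of_mem_of_not_mem ht hsa) b y

theorem prod_mem_update_congr
    (hlocal : ∀ a ∈ F, ∀ x y : V → 𝒱, (∀ v ∈ a, x v = y v) → Ψ a x = Ψ a y)
    {s : V} {x x' : V → 𝒱}
    (hagree_N : ∀ t : V, t ≠ s → (∃ a ∈ F, s ∈ a ∧ t ∈ a) → x t = x' t) (b : 𝒱) :
    ∏ a ∈ F with s ∈ a, Ψ a (update x s b) = ∏ a ∈ F with s ∈ a, Ψ a (update x' s b) := by
  refine prod_congr rfl fun a ha => ?_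
  obtain ⟨haF, hsa⟩ := mem_filter.1 ha
  refine hlocal a haF _ _ fun t ht => ?_
  rcases eq_or_ne t s with rfl | hts
  · simp
  · rw [update_of_ne hts, update_of_ne hts, hagree_N t hts ⟨a, haF, hsa, ht⟩]

end Factorization

theorem factorization_implies_markov_general
    (V 𝒱 : Type) [Fintype V] [DecidableEq V] [Fintype 𝒱] [DecidableEq 𝒱]
    (F : Finset (Finset V)) (Ψ : Finset V → (V → 𝒱) → ℝ)
    (hlocal : ∀ a ∈ F, ∀ x y : V → 𝒱, (∀ v ∈ a, x v = y v) → Ψ a x = Ψ a y)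
    (Z : ℝ)
    (p : (V → 𝒱) → ℝ) (hp : ∀ x, p x = (∏ a ∈ F, Ψ a x) / Z)
    (s : V) (x x' : V → 𝒱)
    -- `x` and `x'` agree on `{s} ∪ N(s)`, where `t ∈ N(s)` iff `t ≠ s` and
    -- `s, t` appear together in some scope `a ∈ F`
    (hagree_s : x s = x' s)
    (hagree_N : ∀ t : V, t ≠ s → (∃ a ∈ F, s ∈ a ∧ t ∈ a) → x t = x' t)
    -- the conditionals are defined
    (hden : 0 < ∑ z : V → 𝒱, if (∀ v : V, v ≠ s → z v = x v) then p z else 0)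
    (hden' : 0 < ∑ z : V → 𝒱, if (∀ v : V, v ≠ s → z v = x' v) then p z else 0) :
    p x / (∑ z : V → 𝒱, if (∀ v : V, v ≠ s → z v = x v) then p z else 0)
      = p x' / (∑ z : V → 𝒱, if (∀ v : V, v ≠ s → z v = x' v) then p z else 0) := by
  set A : 𝒱 → ℝ := fun b => ∏ a ∈ F with s ∈ a, Ψ a (update x s b)
  have hx : ∀ b, p (update x s b) = ((∏ a ∈ F with s ∉ a, Ψ a x) / Z) * A b := fun b => by
    rw [hp, prod_update_eq_mul_prod_not_mem hlocal]
    ring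
  have hx' : ∀ b, p (update x' s b) = ((∏ a ∈ F with s ∉ a, Ψ a x') / Z) * A b := fun b => by
    rw [hp, prod_update_eq_mul_prod_not_mem hlocal, ← prod_mem_update_congr hlocal hagree_N]
    ring
  simp only [sum_ite_agree_off_eq_sum_update] at hden hden' ⊢
  rw [div_sum_update_eq_of_update_eq_mul p A _ hx hden.ne',
    div_sum_update_eq_of_update_eq_mul p A _ hx' hden'.ne', hagree_s]

/-- **Factorization implies the local Markov property.**  If `p` is given by a
normalized product of nonnegative local factors, then the conditional
distribution of the variable at `s` given all other variables depends only on
the values at `s` and its neighbors (vertices sharing a scope with `s`). -/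
theorem factorization_implies_markov
    (V 𝒱 : Type) [Fintype V] [DecidableEq V] [Fintype 𝒱] [DecidableEq 𝒱]
    (F : Finset (Finset V)) (Ψ : Finset V → (V → 𝒱) → ℝ)
    (hnn : ∀ a ∈ F, ∀ x, 0 ≤ Ψ a x)
    (hlocal : ∀ a ∈ F, ∀ x y : V → 𝒱, (∀ v ∈ a, x v = y v) → Ψ a x = Ψ a y)
    (Z : ℝ) (hZ : Z = ∑ z : V → 𝒱, ∏ a ∈ F, Ψ a z) (hZpos : 0 < Z)
    (p : (V → 𝒱) → ℝ) (hp : ∀ x, p x = (∏ a ∈ F, Ψ a x) / Z)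
    (s : V) (x x' : V → 𝒱)
    -- `x` and `x'` agree on `{s} ∪ N(s)`, where `t ∈ N(s)` iff `t ≠ s` and
    -- `s, t` appear together in some scope `a ∈ F`
    (hagree_s : x s = x' s)
    (hagree_N : ∀ t : V, t ≠ s → (∃ a ∈ F, s ∈ a ∧ t ∈ a) → x t = x' t)
    -- the conditionals are defined
    (hden : 0 < ∑ z : V → 𝒱, if (∀ v : V, v ≠ s → z v = x v) then p z else 0)
    (hden' : 0 < ∑ z : V → 𝒱, if (∀ v : V, v ≠ s → z v = x' v) then p z else 0) :
    p x / (∑ z : V → 𝒱, if (∀ v : V, v ≠ s → z v = x v) then p z else 0)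
      = p x' / (∑ z : V → 𝒱, if (∀ v : V, v ≠ s → z v = x' v) then p z else 0) :=
  factorization_implies_markov_general V 𝒱 F Ψ hlocal Z p hp s x x' hagree_s hagree_N hden hden'
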